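/- Let s ≥ 1, let y_1,…,y_s ∈ ℝ, let γ > 0 and λ ≥ 0. Then min_{α ≥ 0} Cost(y_{1:s}, α; γ) equals the minimum, over all integers k ≥ 0 and all changepoint vectors 0 = τ_0 < τ_1 < … < τ_k < τ_{k+1} = s, of Σ_{j=0}^{k} min_{α ≥ 0} { (1/2) Σ_{t=τ_j+1}^{τ_{j+1}} (y_t − α γ^{t−τ_{j+1}})² } + λk; that is, minimizing Cost over the terminal amplitude yields the unconstrained changepoint objective in which each segment's amplitude is optimized separately. -/

import Mathlib

/-- Segment cost `D(a, b, α) = (1/2) ∑_{t=a+1}^{b} (y_t − α γ^{t−b})²`. -/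
noncomputable def segCost (y : ℕ → ℝ) (γ : ℝ) (a b : ℕ) (α : ℝ) : ℝ :=
  (1/2) * ∑ t ∈ Finset.Icc (a+1) b, (y t - α * γ ^ ((t : ℤ) - (b : ℤ)))^2

/-- `τ` is a segmentation of the interval `{a+1,…,b}` with `k` changepoints:
`a = τ 0 < τ 1 < … < τ k < τ (k+1) = b`. -/
def IsSeg (a b k : ℕ) (τ : ℕ → ℕ) : Prop :=
  τ 0 = a ∧ τ (k+1) = b ∧ ∀ j ≤ k, τ j < τ (j+1)

/-- Changepoint objective with per-segment amplitudes:
`∑_{j=0}^{k} D(τ_j, τ_{j+1}, α_j) + λ k`. -/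
noncomputable def objAmp (y : ℕ → ℝ) (γ lam : ℝ) (k : ℕ) (τ : ℕ → ℕ) (α : ℕ → ℝ) : ℝ :=
  (∑ j ∈ Finset.range (k+1), segCost y γ (τ j) (τ (j+1)) (α j)) + lam * k

/-- `F(τ)`: the optimal cost of segmenting the first `τ` data points
(minimum of the changepoint objective over segmentations and nonnegative
amplitudes), with the convention `F(0) = −λ`. -/
noncomputable def Fval (y : ℕ → ℝ) (γ lam : ℝ) : ℕ → ℝ
  | 0 => -lam
  | s+1 => sInf { c | ∃ (k : ℕ) (τ : ℕ → ℕ) (a : ℕ → ℝ), IsSeg 0 (s+1) k τ ∧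
      (∀ j ≤ k, 0 ≤ a j) ∧ c = objAmp y γ lam k τ a }

/-- `Cost(y_{1:s}, α; γ) = min_{0 ≤ τ < s} { F(τ) + D(τ, s, α) + λ }`. -/
noncomputable def Cost (y : ℕ → ℝ) (γ lam : ℝ) (s : ℕ) (α : ℝ) : ℝ :=
  sInf { c | ∃ τ : ℕ, τ < s ∧ c = Fval y γ lam τ + segCost y γ τ s α + lam }

/-- Optimal segment cost `min_{α ≥ 0} D(a, b, α)`. -/
noncomputable def segMin (y : ℕ → ℝ) (γ : ℝ) (a b : ℕ) : ℝ :=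
  sInf { c | ∃ α : ℝ, 0 ≤ α ∧ c = segCost y γ a b α }

/-- Changepoint objective with each segment's amplitude optimized separately:
`∑_{j=0}^{k} min_{α ≥ 0} D(τ_j, τ_{j+1}, α) + λ k`. -/
noncomputable def objOpt (y : ℕ → ℝ) (γ lam : ℝ) (k : ℕ) (τ : ℕ → ℕ) : ℝ :=
  (∑ j ∈ Finset.range (k+1), segMin y γ (τ j) (τ (j+1))) + lam * k

/-!
Splitting off the last segment of a segmentation of `{1,…,s}` bounds `Cost(y_{1:s}, α)` by the
changepoint objective of any amplitudes whose last one is `α`; conversely, appending the segment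
`(τ, s]` to a segmentation of `{1,…,τ}` bounds the optimal objective by `F(τ) + D(τ, s, α) + λ`.
Since distinct segments have independent amplitudes, the infimum of the objective over all of them
is the sum of the per-segment infima, approached within `ε` by taking each amplitude within
`ε / (k + 1)` of its segment's infimum.
-/

open Finset

variable {y : ℕ → ℝ} {γ lam : ℝ}

lemma segCost_nonneg (a b : ℕ) (α : ℝ) : 0 ≤ segCost y γ a b α := by
  unfold segCost
  positivity

lemma segMin_nonneg (a b : ℕ) : 0 ≤ segMin y γ a b := by
  refine Real.sInf_nonneg ?_
  rintro _ ⟨α, -, rfl⟩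
  exact segCost_nonneg a b α

lemma segMin_le_segCost (a b : ℕ) {α : ℝ} (hα : 0 ≤ α) : segMin y γ a b ≤ segCost y γ a b α := by
  refine csInf_le ⟨0, ?_⟩ ⟨α, hα, rfl⟩
  rintro _ ⟨β, -, rfl⟩
  exact segCost_nonneg a b β

lemma exists_segCost_lt_segMin_add (a b : ℕ) {ε : ℝ} (hε : 0 < ε) :
    ∃ α, 0 ≤ α ∧ segCost y γ a b α < segMin y γ a b + ε := by
  have hne : {c | ∃ α : ℝ, 0 ≤ α ∧ c = segCost y γ a b α}.Nonempty := ⟨_, 0, le_rfl, rfl⟩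
  obtain ⟨_, ⟨α, hα, rfl⟩, hlt⟩ := Real.lt_sInf_add_pos hne hε
  exact ⟨α, hα, hlt⟩

lemma objAmp_zero (τ : ℕ → ℕ) (a : ℕ → ℝ) :
    objAmp y γ lam 0 τ a = segCost y γ (τ 0) (τ 1) (a 0) := by
  simp [objAmp]

lemma objAmp_succ (k : ℕ) (τ : ℕ → ℕ) (a : ℕ → ℝ) :
    objAmp y γ lam (k + 1) τ a =
      objAmp y γ lam k τ a + segCost y γ (τ (k + 1)) (τ (k + 2)) (a (k + 1)) + lam := by
  simp only [objAmp, sum_range_succ]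
  push_cast
  ring

lemma objOpt_zero (τ : ℕ → ℕ) : objOpt y γ lam 0 τ = segMin y γ (τ 0) (τ 1) := by
  simp [objOpt]

lemma objOpt_succ (k : ℕ) (τ : ℕ → ℕ) :
    objOpt y γ lam (k + 1) τ =
      objOpt y γ lam k τ + segMin y γ (τ (k + 1)) (τ (k + 2)) + lam := by
  simp only [objOpt, sum_range_succ]
  push_cast
  ring

lemma objOpt_congr {k : ℕ} {τ τ' : ℕ → ℕ} (h : ∀ j ≤ k + 1, τ j = τ' j) :
    objOpt y γ lam k τ = objOpt y γ lam k τ' := by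
  unfold objOpt
  congr 1
  refine sum_congr rfl fun j hj => ?_
  rw [mem_range] at hj
  rw [h j (by omega), h (j + 1) (by omega)]

lemma objAmp_nonneg (hlam : 0 ≤ lam) (k : ℕ) (τ : ℕ → ℕ) (a : ℕ → ℝ) :
    0 ≤ objAmp y γ lam k τ a :=
  add_nonneg (sum_nonneg fun _ _ => segCost_nonneg _ _ _) (by positivity)

lemma objOpt_nonneg (hlam : 0 ≤ lam) (k : ℕ) (τ : ℕ → ℕ) : 0 ≤ objOpt y γ lam k τ :=
  add_nonneg (sum_nonneg fun _ _ => segMin_nonneg _ _) (by positivity)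

lemma objOpt_le_objAmp {k : ℕ} {τ : ℕ → ℕ} {a : ℕ → ℝ} (ha : ∀ j ≤ k, 0 ≤ a j) :
    objOpt y γ lam k τ ≤ objAmp y γ lam k τ a := by
  unfold objOpt objAmp
  gcongr with j hj
  exact segMin_le_segCost _ _ (ha j (Nat.lt_succ_iff.mp (mem_range.mp hj)))

lemma exists_objAmp_le_objOpt_add (k : ℕ) (τ : ℕ → ℕ) {ε : ℝ} (hε : 0 < ε) :
    ∃ a : ℕ → ℝ, (∀ j, 0 ≤ a j) ∧ objAmp y γ lam k τ a ≤ objOpt y γ lam k τ + ε := by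
  have hε' : 0 < ε / (k + 1) := by positivity
  choose a ha hlt using fun j => exists_segCost_lt_segMin_add (y := y) (γ := γ) (τ j) (τ (j + 1)) hε'
  refine ⟨a, ha, ?_⟩
  have hsum : ∑ j ∈ range (k + 1), segCost y γ (τ j) (τ (j + 1)) (a j) ≤
      ∑ j ∈ range (k + 1), (segMin y γ (τ j) (τ (j + 1)) + ε / (k + 1)) :=
    sum_le_sum fun j _ => (hlt j).le
  have hε_sum : ((k + 1 : ℕ) : ℝ) * (ε / (k + 1)) = ε := by
    push_cast
    field_simp
  rw [sum_add_distrib, sum_const, card_range, nsmul_eq_mul, hε_sum] at hsum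
  unfold objAmp objOpt
  linarith

lemma isSeg_single {a b : ℕ} (hab : a < b) : IsSeg a b 0 (fun j => if j = 0 then a else b) :=
  ⟨rfl, rfl, fun j hj => by simpa [Nat.le_zero.mp hj] using hab⟩

lemma IsSeg.init {a b k : ℕ} {τ : ℕ → ℕ} (h : IsSeg a b (k + 1) τ) : IsSeg a (τ (k + 1)) k τ :=
  ⟨h.1, rfl, fun j hj => h.2.2 j (by omega)⟩

lemma IsSeg.snoc {a p b k : ℕ} {τ : ℕ → ℕ} (h : IsSeg a p k τ) (hpb : p < b) :
    IsSeg a b (k + 1) (Function.update τ (k + 2) b) := by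
  refine ⟨by simpa using h.1, by simp, fun j hj => ?_⟩
  rw [Function.update_of_ne (by omega)]
  rcases Nat.lt_or_ge j (k + 1) with hj' | hj'
  · rw [Function.update_of_ne (by omega)]
    exact h.2.2 j (by omega)
  · obtain rfl : j = k + 1 := by omega
    simpa [h.2.1] using hpb

lemma Fval_le_objAmp (hlam : 0 ≤ lam) {b k : ℕ} {τ : ℕ → ℕ} {a : ℕ → ℝ}
    (hseg : IsSeg 0 b k τ) (ha : ∀ j ≤ k, 0 ≤ a j) :
    Fval y γ lam b ≤ objAmp y γ lam k τ a := by
  cases b with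
  | zero =>
    have hlt := hseg.2.2 k le_rfl
    have hlast := hseg.2.1
    omega
  | succ n =>
    refine csInf_le ⟨0, ?_⟩ ⟨k, τ, a, hseg, ha, rfl⟩
    rintro _ ⟨k', τ', a', -, -, rfl⟩
    exact objAmp_nonneg hlam k' τ' a'

lemma Fval_add_nonneg (hlam : 0 ≤ lam) (n : ℕ) : 0 ≤ Fval y γ lam n + lam := by
  cases n with
  | zero => simp [Fval]
  | succ n =>
    have : 0 ≤ Fval y γ lam (n + 1) := by
      refine Real.sInf_nonneg ?_
      rintro _ ⟨k, τ, a, -, -, rfl⟩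
      exact objAmp_nonneg hlam k τ a
    linarith

lemma Cost_nonneg (hlam : 0 ≤ lam) (s : ℕ) (α : ℝ) : 0 ≤ Cost y γ lam s α := by
  refine Real.sInf_nonneg ?_
  rintro _ ⟨τ, -, rfl⟩
  linarith [Fval_add_nonneg (y := y) (γ := γ) hlam τ, segCost_nonneg (y := y) (γ := γ) τ s α]

lemma Cost_le (hlam : 0 ≤ lam) {s τ : ℕ} (hτ : τ < s) (α : ℝ) :
    Cost y γ lam s α ≤ Fval y γ lam τ + segCost y γ τ s α + lam := by
  refine csInf_le ⟨0, ?_⟩ ⟨τ, hτ, rfl⟩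
  rintro _ ⟨τ', -, rfl⟩
  linarith [Fval_add_nonneg (y := y) (γ := γ) hlam τ', segCost_nonneg (y := y) (γ := γ) τ' s α]

lemma Cost_le_objAmp (hlam : 0 ≤ lam) {s k : ℕ} {τ : ℕ → ℕ} {a : ℕ → ℝ}
    (hseg : IsSeg 0 s k τ) (ha : ∀ j ≤ k, 0 ≤ a j) :
    Cost y γ lam s (a k) ≤ objAmp y γ lam k τ a := by
  have hτs : τ k < s := hseg.2.1 ▸ hseg.2.2 k le_rfl
  refine (Cost_le hlam hτs (a k)).trans ?_
  cases k with
  | zero => simp [Fval, hseg.1, objAmp_zero, hseg.2.1]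
  | succ m =>
    have hF := Fval_le_objAmp (y := y) (γ := γ) hlam hseg.init fun j hj => ha j (by omega)
    rw [objAmp_succ, hseg.2.1]
    linarith

lemma sInf_objOpt_le (hlam : 0 ≤ lam) {s k : ℕ} {τ : ℕ → ℕ} (hseg : IsSeg 0 s k τ) :
    sInf {c | ∃ (k : ℕ) (τ : ℕ → ℕ), IsSeg 0 s k τ ∧ c = objOpt y γ lam k τ} ≤
      objOpt y γ lam k τ := by
  refine csInf_le ⟨0, ?_⟩ ⟨k, τ, hseg, rfl⟩
  rintro _ ⟨k', τ', -, rfl⟩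
  exact objOpt_nonneg hlam k' τ'

lemma sInf_objOpt_le_objAmp_add (hlam : 0 ≤ lam) {p s k : ℕ} {τ : ℕ → ℕ} {a : ℕ → ℝ}
    (hseg : IsSeg 0 p k τ) (ha : ∀ j ≤ k, 0 ≤ a j) (hps : p < s) {α : ℝ} (hα : 0 ≤ α) :
    sInf {c | ∃ (k : ℕ) (τ : ℕ → ℕ), IsSeg 0 s k τ ∧ c = objOpt y γ lam k τ} ≤
      objAmp y γ lam k τ a + segCost y γ p s α + lam := by
  have hext : objOpt y γ lam (k + 1) (Function.update τ (k + 2) s) =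
      objOpt y γ lam k τ + segMin y γ p s + lam := by
    rw [objOpt_succ, objOpt_congr fun j hj => Function.update_of_ne (by omega) _ _,
      Function.update_of_ne (by omega), Function.update_self, hseg.2.1]
  have hlast := segMin_le_segCost (y := y) (γ := γ) p s hα
  have hinit := objOpt_le_objAmp (y := y) (γ := γ) (lam := lam) (τ := τ) ha
  linarith [sInf_objOpt_le (y := y) (γ := γ) hlam (hseg.snoc hps)]

lemma sInf_objOpt_le_Fval_add (hlam : 0 ≤ lam) {p s : ℕ} (hps : p < s) {α : ℝ} (hα : 0 ≤ α) :
    sInf {c | ∃ (k : ℕ) (τ : ℕ → ℕ), IsSeg 0 s k τ ∧ c = objOpt y γ lam k τ} ≤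
      Fval y γ lam p + segCost y γ p s α + lam := by
  cases p with
  | zero =>
    have h := sInf_objOpt_le (y := y) (γ := γ) hlam (isSeg_single hps)
    rw [objOpt_zero] at h
    simpa [Fval] using h.trans (segMin_le_segCost 0 s hα)
  | succ n =>
    suffices h : sInf {c | ∃ (k : ℕ) (τ : ℕ → ℕ), IsSeg 0 s k τ ∧ c = objOpt y γ lam k τ} -
        segCost y γ (n + 1) s α - lam ≤ Fval y γ lam (n + 1) by linarith
    refine le_csInf ⟨_, 0, _, 0, isSeg_single n.succ_pos, fun _ _ => le_rfl, rfl⟩ ?_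
    rintro _ ⟨k, τ, a, hseg, ha, rfl⟩
    linarith [sInf_objOpt_le_objAmp_add (y := y) (γ := γ) hlam hseg ha hps hα]

theorem min_cost_eq_changepoint_general (s : ℕ) (hs : 1 ≤ s) (y : ℕ → ℝ)
    (γ lam : ℝ) (hlam : 0 ≤ lam) :
    sInf { c | ∃ α : ℝ, 0 ≤ α ∧ c = Cost y γ lam s α } =
      sInf { c | ∃ (k : ℕ) (τ : ℕ → ℕ), IsSeg 0 s k τ ∧ c = objOpt y γ lam k τ } := by
  apply le_antisymm
  · refine le_csInf ⟨_, 0, _, isSeg_single hs, rfl⟩ ?_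
    rintro _ ⟨k, τ, hseg, rfl⟩
    refine le_of_forall_pos_le_add fun ε hε => ?_
    obtain ⟨a, ha, hle⟩ := exists_objAmp_le_objOpt_add (y := y) (γ := γ) (lam := lam) k τ hε
    calc sInf { c | ∃ α : ℝ, 0 ≤ α ∧ c = Cost y γ lam s α }
        ≤ Cost y γ lam s (a k) :=
          csInf_le ⟨0, by rintro _ ⟨α, -, rfl⟩; exact Cost_nonneg hlam s α⟩ ⟨a k, ha k, rfl⟩
      _ ≤ objAmp y γ lam k τ a := Cost_le_objAmp hlam hseg fun j _ => ha j
      _ ≤ objOpt y γ lam k τ + ε := hle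
  · refine le_csInf ⟨_, 0, le_rfl, rfl⟩ ?_
    rintro _ ⟨α, hα, rfl⟩
    refine le_csInf ⟨_, 0, hs, rfl⟩ ?_
    rintro _ ⟨p, hp, rfl⟩
    exact sInf_objOpt_le_Fval_add hlam hp hα

/-- For `s ≥ 1`, `γ > 0`, `λ ≥ 0`, minimizing `Cost(y_{1:s}, α; γ)` over
`α ≥ 0` yields the unconstrained changepoint objective with each segment's amplitude
optimized separately. -/
theorem min_cost_eq_changepoint (s : ℕ) (hs : 1 ≤ s) (y : ℕ → ℝ)
    (γ lam : ℝ) (hγ : 0 < γ) (hlam : 0 ≤ lam) :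
    sInf { c | ∃ α : ℝ, 0 ≤ α ∧ c = Cost y γ lam s α } =
      sInf { c | ∃ (k : ℕ) (τ : ℕ → ℕ), IsSeg 0 s k τ ∧ c = objOpt y γ lam k τ } :=
  min_cost_eq_changepoint_general s hs y γ lam hlam
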